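/- If θ > 1 is a real number, then the cardinality of D_n(θ) = {∑_{k=1}^n a_k θ^k : a_k ∈ {0,1,...,⌊θ⌋}} is at least c·θ^n for some constant c > 0 independent of n. -/

import Mathlib

open Finset Polynomial

/-- `Dn θ n` is the set of sums `∑_{k=1}^n a_k θ^k` with digits `a_k ∈ {0,…,⌊θ⌋}`. -/
noncomputable def Dn (θ : ℝ) (n : ℕ) : Finset ℝ :=
  (Finset.univ : Finset (Fin n → Fin (⌊θ⌋₊ + 1))).image
    (fun a => ∑ k : Fin n, (a k : ℝ) * θ ^ ((k : ℕ) + 1))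

/-- A Perron number: an algebraic integer `θ > 1` all of whose other Galois
conjugates (roots of its minimal polynomial in `ℂ`) have absolute value `< θ`. -/
def IsPerron (θ : ℝ) : Prop :=
  1 < θ ∧ IsIntegral ℤ θ ∧
    ∀ z : ℂ, Polynomial.aeval z (minpoly ℤ θ) = 0 → z ≠ (θ : ℂ) → ‖z‖ < θ

/-!
Greedy expansion: every `x ∈ [0, θ^(n+1))` lies in `[d, d + θ)` for some `d ∈ D_n(θ)`, found by
choosing the digits from the top down. The points `θ m`, `0 ≤ m < θ^n`, are `θ`-separated, so
no two of them share such a `d`; hence `#D_n(θ) ≥ ⌈θ^n⌉ ≥ θ^n`, i.e. one may take `c = 1`.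
-/

lemma zero_mem_Dn_zero (θ : ℝ) : (0 : ℝ) ∈ Dn θ 0 :=
  mem_image.mpr ⟨Fin.elim0, mem_univ _, by simp⟩

lemma add_mem_Dn_succ {θ d : ℝ} {n a : ℕ} (hd : d ∈ Dn θ n) (ha : a ≤ ⌊θ⌋₊) :
    d + a * θ ^ (n + 1) ∈ Dn θ (n + 1) := by
  obtain ⟨digits, -, rfl⟩ := mem_image.mp hd
  refine mem_image.mpr ⟨Fin.snoc digits ⟨a, Nat.lt_succ_of_le ha⟩, mem_univ _, ?_⟩
  simp [Fin.sum_univ_castSucc]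

lemma exists_mem_Dn_le_lt_add {θ : ℝ} (hθ : 0 < θ) (n : ℕ) {x : ℝ} (hx₀ : 0 ≤ x)
    (hx : x < θ ^ (n + 1)) : ∃ d ∈ Dn θ n, d ≤ x ∧ x < d + θ := by
  induction n generalizing x with
  | zero => exact ⟨0, zero_mem_Dn_zero θ, hx₀, by simpa using hx⟩
  | succ n ih =>
    have hpow : 0 < θ ^ (n + 1) := pow_pos hθ _
    set a := ⌊x / θ ^ (n + 1)⌋₊
    have ha : a ≤ ⌊θ⌋₊ := Nat.floor_le_floor <| by
      rw [div_le_iff₀ hpow, ← pow_succ']; exact hx.le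
    have hax : a * θ ^ (n + 1) ≤ x := (le_div_iff₀ hpow).mp (Nat.floor_le (by positivity))
    have hxa : x < (a + 1) * θ ^ (n + 1) := (div_lt_iff₀ hpow).mp (Nat.lt_floor_add_one _)
    obtain ⟨d, hd, hdx, hxd⟩ := ih (x := x - a * θ ^ (n + 1)) (by linarith) (by linarith)
    exact ⟨d + a * θ ^ (n + 1), add_mem_Dn_succ hd ha, by linarith, by linarith⟩

lemma pow_le_card_Dn {θ : ℝ} (hθ : 0 < θ) (n : ℕ) : θ ^ n ≤ #(Dn θ n) := by
  have hcover : ∀ m ∈ range ⌈θ ^ n⌉₊, ∃ d ∈ Dn θ n, d ≤ θ * m ∧ θ * m < d + θ := by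
    intro m hm
    have hm : (m : ℝ) < θ ^ n := Nat.lt_ceil.mp (mem_range.mp hm)
    exact exists_mem_Dn_le_lt_add hθ n (by positivity) (by rw [pow_succ']; gcongr)
  choose! f hfD hf using hcover
  have hinj : Set.InjOn f (range ⌈θ ^ n⌉₊) := by
    intro a ha b hb hab
    obtain ⟨ha₁, ha₂⟩ := hf a ha
    obtain ⟨hb₁, hb₂⟩ := hf b hb
    rw [hab] at ha₁ ha₂
    have hab' : a < b + 1 := by exact_mod_cast (by nlinarith : (a : ℝ) < b + 1)
    have hba' : b < a + 1 := by exact_mod_cast (by nlinarith : (b : ℝ) < a + 1)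
    omega
  calc θ ^ n ≤ ⌈θ ^ n⌉₊ := Nat.le_ceil _
    _ = #(range ⌈θ ^ n⌉₊) := by rw [card_range]
    _ ≤ #(Dn θ n) := by exact_mod_cast card_le_card_of_injOn f hfD hinj

theorem stmt_0 (θ : ℝ) (hθ : 1 < θ) :
    ∃ c : ℝ, 0 < c ∧ ∀ n : ℕ, c * θ ^ n ≤ ((Dn θ n).card : ℝ) :=
  ⟨1, one_pos, fun n => by simpa using pow_le_card_Dn (by linarith) n⟩
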